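/- (U-turn lemma.) Let c be a configuration pair and T a sequence of transition pairs such that: (i) T(c) lies completely inside some belt of slope α/β (co-prime α, β ∈ [1, K²], thickness P₂(K) = 6K⁴); (ii) the total counter effect ce(T) = 0; and (iii) max{ce(T_{0…k}) : 0 ≤ k ≤ |T|} > (K²·P₂(K) + 1)². Then there exist indices i < j < k < ℓ such that the sequence T′ = T_{1…i}T_{j+1…k}T_{ℓ+1…|T|} applied to c is a valid run inside the same belt, ce(T′) = 0, and the ending configuration pairs of T′(c) and T(c) have the same states and the same counter values (they may differ only in their weights). -/

import Mathlib

/-- A deterministic weighted real-time one-counter automaton (dwROCA) over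
alphabet `A` and field `S`.  `next q b a`, `upd q b a`, `wt q b a` give the
target state, counter update and (nonzero) weight of the unique transition
from state `q` reading letter `a` with counter-status `b` (`true` = counter is
zero). -/
structure DWROCA (A : Type) (S : Type) [Field S] where
  Q : Type
  fin : Fintype Q
  q0 : Q
  s0 : S
  s0_ne : s0 ≠ 0
  next : Q → Bool → A → Q
  upd : Q → Bool → A → ℤ
  wt : Q → Bool → A → S
  upd_mem : ∀ q b a, upd q b a ∈ ({-1, 0, 1} : Set ℤ)
  no_dec_on_zero : ∀ q a, upd q true a ≠ -1
  wt_ne : ∀ q b a, wt q b a ≠ 0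

attribute [instance] DWROCA.fin

/-- Configurations: a state, a counter value and a weight. -/
abbrev DWROCA.Cfg {A S : Type} [Field S] (M : DWROCA A S) : Type := M.Q × ℕ × S

variable {A S : Type} [Field S]

/-- One step of a dwROCA on a configuration. -/
def DWROCA.step (M : DWROCA A S) (c : M.Cfg) (x : A) : M.Cfg :=
  (M.next c.1 (decide (c.2.1 = 0)) x,
   ((c.2.1 : ℤ) + M.upd c.1 (decide (c.2.1 = 0)) x).toNat,
   c.2.2 * M.wt c.1 (decide (c.2.1 = 0)) x)

/-- The run of a dwROCA on a word from a configuration. -/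
def DWROCA.run (M : DWROCA A S) (c : M.Cfg) (w : List A) : M.Cfg :=
  w.foldl M.step c

/-- `f(w, c)`: the value assigned to the word `w` by the configuration `c`. -/
def DWROCA.val (M : DWROCA A S) (c : M.Cfg) (w : List A) : S :=
  (M.run c w).2.2

/-- The initial configuration. -/
def DWROCA.init (M : DWROCA A S) : M.Cfg := (M.q0, 0, M.s0)

/-- The function `f_A : Σ* → S` computed by a dwROCA. -/
def DWROCA.f (M : DWROCA A S) (w : List A) : S := M.val M.init w

/-- One step of the underlying uninitialised weighted automaton `uwa(M)`:
the counter is ignored (nonzero tests are always taken).  Its configurations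
are pairs (state, weight). -/
def DWROCA.ustep (M : DWROCA A S) (c : M.Q × S) (x : A) : M.Q × S :=
  (M.next c.1 false x, c.2 * M.wt c.1 false x)

/-- The value assigned to a word by a configuration of `uwa(M)`. -/
def DWROCA.uval (M : DWROCA A S) (c : M.Q × S) (w : List A) : S :=
  (w.foldl M.ustep c).2

/-- `k`-equivalence of configurations of two dwROCAs. -/
def kEquiv (M N : DWROCA A S) (c : M.Cfg) (d : N.Cfg) (k : ℕ) : Prop :=
  ∀ w : List A, w.length ≤ k → M.val c w = N.val d w

/-- `k`-equivalence of a configuration of `M` with a configuration of the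
underlying weighted automaton `uwa(N)`. -/
def kEquivU (M N : DWROCA A S) (c : M.Cfg) (d : N.Q × S) (k : ℕ) : Prop :=
  ∀ w : List A, w.length ≤ k → M.val c w = N.uval d w

/-- Membership in `NWA` (relative to the pair `A₁`, `A₂`): a configuration of
`M` (where `M` is `A₁` or `A₂`) not `K`-equivalent to any configuration of
`uwa(A₁) ∪ uwa(A₂)`. -/
def inNWA (A₁ A₂ M : DWROCA A S) (c : M.Cfg) (K : ℕ) : Prop :=
  (∀ d : A₁.Q × S, ¬ kEquivU M A₁ c d K) ∧ (∀ d : A₂.Q × S, ¬ kEquivU M A₂ c d K)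

/-- `dist(c)`: least length of a word taking `c` into `NWA` (`⊤` if none). -/
noncomputable def distNWA (A₁ A₂ M : DWROCA A S) (c : M.Cfg) (K : ℕ) : ℕ∞ :=
  sInf {n : ℕ∞ | ∃ w : List A, (w.length : ℕ∞) = n ∧ inNWA A₁ A₂ M (M.run c w) K}

/-- A configuration pair is surely-equivalent if the two configurations are
`K`-equivalent and both have infinite distance to `NWA`. -/
def surelyEq (A₁ A₂ : DWROCA A S) (c : A₁.Cfg) (d : A₂.Cfg) (K : ℕ) : Prop :=
  kEquiv A₁ A₂ c d K ∧ distNWA A₁ A₂ A₁ c K = ⊤ ∧ distNWA A₁ A₂ A₂ d K = ⊤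

/-- A configuration pair is surely-nonequivalent if the two configurations are
not `K`-equivalent or have different distances to `NWA`. -/
def surelyNonEq (A₁ A₂ : DWROCA A S) (c : A₁.Cfg) (d : A₂.Cfg) (K : ℕ) : Prop :=
  ¬ kEquiv A₁ A₂ c d K ∨ distNWA A₁ A₂ A₁ c K ≠ distNWA A₁ A₂ A₂ d K

/-- A configuration pair is unresolved if the configurations are `K`-equivalent
and have equal finite distances to `NWA`. -/
def unresolved (A₁ A₂ : DWROCA A S) (c : A₁.Cfg) (d : A₂.Cfg) (K : ℕ) : Prop :=
  kEquiv A₁ A₂ c d K ∧ distNWA A₁ A₂ A₁ c K = distNWA A₁ A₂ A₂ d K ∧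
    distNWA A₁ A₂ A₁ c K ≠ ⊤

/-- `w` is a minimal-length witness distinguishing `A₁` and `A₂`. -/
def IsMinWitness (A₁ A₂ : DWROCA A S) (w : List A) : Prop :=
  A₁.f w ≠ A₂.f w ∧ ∀ v : List A, A₁.f v ≠ A₂.f v → w.length ≤ v.length

/-- The `i`-th configuration pair `c_i` of the run of `w` from the initial
configuration pair. -/
def pairAt (A₁ A₂ : DWROCA A S) (w : List A) (i : ℕ) : A₁.Cfg × A₂.Cfg :=
  (A₁.run A₁.init (w.take i), A₂.run A₂.init (w.take i))

/-- Applying a sequence of transition pairs (determined, by determinism, by a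
word) to a configuration pair. -/
def runPair (A₁ A₂ : DWROCA A S) (c : A₁.Cfg × A₂.Cfg) (w : List A) :
    A₁.Cfg × A₂.Cfg :=
  (A₁.run c.1 w, A₂.run c.2 w)

/-- A configuration pair lies in the belt of slope `α/β` and thickness `d`. -/
def inBelt (α β d : ℕ) {A₁ A₂ : DWROCA A S} (c : A₁.Cfg × A₂.Cfg) : Prop :=
  |(α : ℤ) * (c.1.2.1 : ℤ) - (β : ℤ) * (c.2.2.1 : ℤ)| ≤ (d : ℤ)

/-- Two configuration pairs are `(α/β)`-related: same state pairs and same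
value of `α·m - β·n`. -/
def abRelated (α β : ℕ) {A₁ A₂ : DWROCA A S} (c c' : A₁.Cfg × A₂.Cfg) : Prop :=
  c.1.1 = c'.1.1 ∧ c.2.1 = c'.2.1 ∧
    (α : ℤ) * (c.1.2.1 : ℤ) - (β : ℤ) * (c.2.2.1 : ℤ) =
      (α : ℤ) * (c'.1.2.1 : ℤ) - (β : ℤ) * (c'.2.2.1 : ℤ)

section UturnAux

variable {A S : Type} [Field S]

lemma DWROCA.run_nil (M : DWROCA A S) (c : M.Cfg) : M.run c [] = c := rfl

lemma DWROCA.run_cons (M : DWROCA A S) (c : M.Cfg) (x : A) (w : List A) :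
    M.run c (x :: w) = M.run (M.step c x) w := rfl

lemma DWROCA.run_append (M : DWROCA A S) (c : M.Cfg) (w₁ w₂ : List A) :
    M.run c (w₁ ++ w₂) = M.run (M.run c w₁) w₂ :=
  List.foldl_append

lemma step_counter (M : DWROCA A S) (c : M.Cfg) (x : A) :
    ((M.step c x).2.1 : ℤ) = (c.2.1 : ℤ) + M.upd c.1 (decide (c.2.1 = 0)) x := by
  have hu := M.upd_mem c.1 (decide (c.2.1 = 0)) x
  simp only [Set.mem_insert_iff, Set.mem_singleton_iff] at hu
  have hnn : (0:ℤ) ≤ (c.2.1 : ℤ) + M.upd c.1 (decide (c.2.1 = 0)) x := by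
    rcases Nat.eq_zero_or_pos c.2.1 with h0 | h1
    · have hdec : (decide (c.2.1 = 0)) = true := by simp [h0]
      rw [hdec] at hu ⊢
      have hne := M.no_dec_on_zero c.1 x
      rw [h0]
      rcases hu with h | h | h
      · exact absurd h hne
      · rw [h]; norm_num
      · rw [h]; norm_num
    · have h1' : (1:ℤ) ≤ (c.2.1 : ℤ) := by exact_mod_cast h1
      rcases hu with h | h | h <;> rw [h] <;> linarith
  simp only [DWROCA.step]
  exact Int.toNat_of_nonneg hnn

lemma counter_take_succ (M : DWROCA A S) (c : M.Cfg) (w : List A) (p : ℕ) :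
    ((M.run c (w.take p)).2.1 : ℤ) - 1 ≤ ((M.run c (w.take (p+1))).2.1 : ℤ) ∧
      ((M.run c (w.take (p+1))).2.1 : ℤ) ≤ ((M.run c (w.take p)).2.1 : ℤ) + 1 := by
  rcases le_or_gt w.length p with hp | hp
  · rw [List.take_of_length_le hp, List.take_of_length_le (by omega)]
    omega
  · have hsplit : w.take (p+1) = w.take p ++ [w[p]] := by
      rw [List.take_succ]
      simp [List.getElem?_eq_getElem hp]
    rw [hsplit, M.run_append]
    have hrun : M.run (M.run c (w.take p)) [w[p]] = M.step (M.run c (w.take p)) w[p] := rfl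
    rw [hrun]
    have h := step_counter M (M.run c (w.take p)) w[p]
    have hu := M.upd_mem (M.run c (w.take p)).1
      (decide ((M.run c (w.take p)).2.1 = 0)) w[p]
    simp only [Set.mem_insert_iff, Set.mem_singleton_iff] at hu
    rcases hu with h' | h' | h' <;> rw [h'] at h <;> omega

lemma run_shift (M : DWROCA A S) :
    ∀ (w : List A) (q : M.Q) (ml t : ℕ) (s s' : S),
      (∀ p, p ≤ w.length → t + 1 ≤ (M.run (q, ml + t, s) (w.take p)).2.1) →
      ∀ p, p ≤ w.length →
        (M.run (q, ml, s') (w.take p)).1 = (M.run (q, ml + t, s) (w.take p)).1 ∧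
        (M.run (q, ml, s') (w.take p)).2.1 + t = (M.run (q, ml + t, s) (w.take p)).2.1 := by
  intro w
  induction w with
  | nil =>
    intro q ml t s s' _ p hp
    simp only [List.length_nil, Nat.le_zero] at hp
    subst hp
    exact ⟨rfl, rfl⟩
  | cons x w ih =>
    intro q ml t s s' h p hp
    have h0 : t + 1 ≤ ml + t := by
      have := h 0 (by simp)
      simpa [DWROCA.run] using this
    have hml : 1 ≤ ml := by omega
    have hlne : (decide (ml = 0)) = false := by simp; omega
    have hhne : (decide (ml + t = 0)) = false := by simp; omega
    have humem := M.upd_mem q false x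
    simp only [Set.mem_insert_iff, Set.mem_singleton_iff] at humem
    have hunn : (0:ℤ) ≤ (ml : ℤ) + M.upd q false x := by
      have : (1:ℤ) ≤ (ml:ℤ) := by exact_mod_cast hml
      rcases humem with h' | h' | h' <;> rw [h'] <;> linarith
    set u : ℤ := M.upd q false x with hu
    have htn : (((ml:ℤ) + u).toNat : ℤ) = (ml:ℤ) + u := Int.toNat_of_nonneg hunn
    have hstep_lo : M.step (q, ml, s') x
        = (M.next q false x, ((ml:ℤ) + u).toNat, s' * M.wt q false x) := by
      simp only [DWROCA.step, hlne, ← hu]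
    have h2 : (((ml:ℕ) + t : ℕ) : ℤ) + u = (((ml:ℤ) + u).toNat + t : ℕ) := by
      push_cast
      omega
    have hstep_hi : M.step (q, ml + t, s) x
        = (M.next q false x, ((ml:ℤ) + u).toNat + t, s * M.wt q false x) := by
      simp only [DWROCA.step, hhne, ← hu]
      rw [show ((((ml + t : ℕ)) : ℤ) + u).toNat = ((ml:ℤ) + u).toNat + t by omega]
    match p with
    | 0 => exact ⟨rfl, rfl⟩
    | Nat.succ p =>
      have hp' : p ≤ w.length := by simpa using hp
      rw [show (x :: w).take (p+1) = x :: w.take p from List.take_succ_cons]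
      rw [M.run_cons, M.run_cons, hstep_lo, hstep_hi]
      refine ih (M.next q false x) (((ml:ℤ) + u).toNat) t _ _ ?_ p hp'
      intro r hr
      have := h (r+1) (by simpa using hr)
      rw [List.take_succ_cons, M.run_cons, hstep_hi] at this
      exact this

lemma run_wt_irrel (M : DWROCA A S) :
    ∀ (w : List A) (q : M.Q) (mm : ℕ) (s s' : S),
      (M.run (q, mm, s') w).1 = (M.run (q, mm, s) w).1 ∧
      (M.run (q, mm, s') w).2.1 = (M.run (q, mm, s) w).2.1 := by
  intro w
  induction w with
  | nil => intro q mm s s'; exact ⟨rfl, rfl⟩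
  | cons x w ih =>
    intro q mm s s'
    have hst : ∀ s₀ : S, M.step (q, mm, s₀) x
        = (M.next q (decide (mm = 0)) x,
           ((mm:ℤ) + M.upd q (decide (mm = 0)) x).toNat,
           s₀ * M.wt q (decide (mm = 0)) x) := fun s₀ => rfl
    rw [M.run_cons, M.run_cons, hst, hst]
    exact ih _ _ _ _

end UturnAux
set_option maxHeartbeats 2000000 in
/-- u-turn lemma: if `T(c)` stays inside a belt of slope `α/β`
(co-prime `α, β ∈ [1,K²]`, thickness `6K⁴`), the total counter effect of `T`
is `0`, and some prefix of `T` has counter effect exceeding `(K²·6K⁴ + 1)²`,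
then one can cut out two sub-runs (an up-part and the matching down-part) and
obtain a run `T'(c)` inside the same belt with counter effect `0` whose ending
configuration pair agrees with that of `T(c)` on states and counter values. -/
theorem uturn_lemma {A S : Type} [Field S]
    (A₁ A₂ : DWROCA A S) (K : ℕ)
    (hK : K = Fintype.card A₁.Q + Fintype.card A₂.Q)
    (α β : ℕ) (hα : 1 ≤ α) (hα' : α ≤ K ^ 2) (hβ : 1 ≤ β) (hβ' : β ≤ K ^ 2)
    (hcop : Nat.Coprime α β)
    (c : A₁.Cfg × A₂.Cfg) (T : List A)
    (hbelt : ∀ i ≤ T.length, inBelt α β (6 * K ^ 4) (runPair A₁ A₂ c (T.take i)))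
    (hce0 : (runPair A₁ A₂ c T).1.2.1 = c.1.2.1 ∧ (runPair A₁ A₂ c T).2.2.1 = c.2.2.1)
    (hmax : ∃ k ≤ T.length,
      ((runPair A₁ A₂ c (T.take k)).1.2.1 : ℤ) - (c.1.2.1 : ℤ) >
        ((K ^ 2 * (6 * K ^ 4) + 1 : ℤ)) ^ 2) :
    ∃ i j k l : ℕ, i < j ∧ j < k ∧ k < l ∧ l ≤ T.length ∧
      (∀ r ≤ (T.take i ++ (T.drop j).take (k - j) ++ T.drop l).length,
        inBelt α β (6 * K ^ 4)
          (runPair A₁ A₂ c ((T.take i ++ (T.drop j).take (k - j) ++ T.drop l).take r))) ∧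
      (runPair A₁ A₂ c (T.take i ++ (T.drop j).take (k - j) ++ T.drop l)).1.2.1 = c.1.2.1 ∧
      (runPair A₁ A₂ c (T.take i ++ (T.drop j).take (k - j) ++ T.drop l)).2.2.1 = c.2.2.1 ∧
      (runPair A₁ A₂ c (T.take i ++ (T.drop j).take (k - j) ++ T.drop l)).1.1 =
        (runPair A₁ A₂ c T).1.1 ∧
      (runPair A₁ A₂ c (T.take i ++ (T.drop j).take (k - j) ++ T.drop l)).2.1 =
        (runPair A₁ A₂ c T).2.1 ∧
      (runPair A₁ A₂ c (T.take i ++ (T.drop j).take (k - j) ++ T.drop l)).1.2.1 =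
        (runPair A₁ A₂ c T).1.2.1 ∧
      (runPair A₁ A₂ c (T.take i ++ (T.drop j).take (k - j) ++ T.drop l)).2.2.1 =
        (runPair A₁ A₂ c T).2.2.1 := by
  classical
  obtain ⟨hce1, hce2⟩ := hce0
  have hQ1 : 0 < Fintype.card A₁.Q := Fintype.card_pos_iff.mpr ⟨A₁.q0⟩
  have hQ2 : 0 < Fintype.card A₂.Q := Fintype.card_pos_iff.mpr ⟨A₂.q0⟩
  have hK2 : 2 ≤ K := by omega
  -- the counter/state sequences
  set m : ℕ → ℕ := fun p => (A₁.run c.1 (T.take p)).2.1 with hm_def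
  set nn : ℕ → ℕ := fun p => (A₂.run c.2 (T.take p)).2.1 with hn_def
  set q1 : ℕ → A₁.Q := fun p => (A₁.run c.1 (T.take p)).1 with hq1_def
  set q2 : ℕ → A₂.Q := fun p => (A₂.run c.2 (T.take p)).1 with hq2_def
  have hm0 : m 0 = c.1.2.1 := rfl
  have hn0 : nn 0 = c.2.2.1 := rfl
  have hmL : m T.length = c.1.2.1 := by
    simp only [hm_def, List.take_length]; exact hce1
  have hnL : nn T.length = c.2.2.1 := by
    simp only [hn_def, List.take_length]; exact hce2
  have hm0L : m T.length = m 0 := by rw [hmL, hm0]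
  have hbelt' : ∀ p, p ≤ T.length →
      |(α:ℤ) * (m p) - (β:ℤ) * (nn p)| ≤ ((6*K^4 : ℕ) : ℤ) := by
    intro p hp
    have h := hbelt p hp
    simp only [hm_def, hn_def]
    exact h
  have hmstep : ∀ p : ℕ, ((m (p+1)):ℤ) ≤ (m p : ℤ) + 1 ∧ ((m p : ℤ)) - 1 ≤ (m (p+1) : ℤ) := by
    intro p
    have h := counter_take_succ A₁ c.1 T p
    simp only [hm_def]
    exact ⟨h.2, h.1⟩
  -- the maximum prefix
  obtain ⟨k0, hk0le, hbig⟩ := hmax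
  set B := 6*K^6+1 with hB_def
  have hbig' : m 0 + B^2 < m k0 := by
    have e1 : (((K:ℤ)) ^ 2 * (6 * (K:ℤ) ^ 4) + 1) ^ 2 = ((B^2 : ℕ) : ℤ) := by
      rw [hB_def]; push_cast; ring
    have e2 : ((runPair A₁ A₂ c (T.take k0)).1.2.1 : ℤ) = (m k0 : ℤ) := by
      simp only [hm_def]; rfl
    rw [e2, ← hm0] at hbig
    have e3 : ((m 0 : ℤ)) + ((B^2 : ℕ) : ℤ) < (m k0 : ℤ) := by
      rw [← e1]; linarith only [hbig]
    exact_mod_cast e3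
  -- level functions
  have hexd : ∀ h : ℕ, ∃ t, m (k0 + t) ≤ m 0 + h := by
    intro h
    refine ⟨T.length - k0, ?_⟩
    rw [Nat.add_sub_cancel' hk0le]
    omega
  set u : ℕ → ℕ := fun h => Nat.findGreatest (fun p => m p ≤ m 0 + h) k0 with hu_def
  set d : ℕ → ℕ := fun h => k0 + Nat.find (hexd h) with hd_def
  have hfacts : ∀ h : ℕ, 1 ≤ h → h ≤ B^2 →
      u h < k0 ∧ m (u h) = m 0 + h ∧ k0 < d h ∧ d h ≤ T.length ∧ m (d h) = m 0 + h ∧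
      (∀ p, u h ≤ p → p ≤ k0 → m 0 + h ≤ m p) ∧
      (∀ p, k0 ≤ p → p ≤ d h → m 0 + h ≤ m p) := by
    intro h h1 h2
    have hlt : m 0 + h < m k0 := by linarith only [hbig', h2]
    have hu_le : u h ≤ k0 := by simp only [hu_def]; exact Nat.findGreatest_le k0
    have hu_spec : m (u h) ≤ m 0 + h := by
      simp only [hu_def]
      exact Nat.findGreatest_spec (P := fun p => m p ≤ m 0 + h) (Nat.zero_le k0)
        (Nat.le_add_right _ _)
    have hu_gt : ∀ p, u h < p → p ≤ k0 → m 0 + h < m p := by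
      intro p hp1 hp2
      simp only [hu_def] at hp1
      have hng := Nat.findGreatest_is_greatest hp1 hp2
      simp only [not_le] at hng
      exact hng
    have hu_lt : u h < k0 := by
      rcases lt_or_eq_of_le hu_le with h' | h'
      · exact h'
      · rw [h'] at hu_spec; omega
    have hu_eq : m (u h) = m 0 + h := by
      have h3 := hu_gt (u h + 1) (Nat.lt_succ_self _) (by omega)
      have h4 := (hmstep (u h)).1
      omega
    have hd_spec : m (k0 + Nat.find (hexd h)) ≤ m 0 + h := Nat.find_spec (hexd h)
    have hd_gt : ∀ s, s < Nat.find (hexd h) → m 0 + h < m (k0 + s) := by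
      intro s hs
      have := Nat.find_min (hexd h) hs
      simp only [not_le] at this
      exact this
    have ht0pos : 0 < Nat.find (hexd h) := by
      rcases Nat.eq_zero_or_pos (Nat.find (hexd h)) with h' | h'
      · exfalso; rw [h'] at hd_spec; simp only [Nat.add_zero] at hd_spec; omega
      · exact h'
    have hd_le' : Nat.find (hexd h) ≤ T.length - k0 :=
      Nat.find_min' (hexd h) (by rw [Nat.add_sub_cancel' hk0le]; omega)
    have hd_eq : m (k0 + Nat.find (hexd h)) = m 0 + h := by
      have h3 := hd_gt (Nat.find (hexd h) - 1) (by omega)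
      have h4 := (hmstep (k0 + (Nat.find (hexd h) - 1))).2
      have h5 : k0 + (Nat.find (hexd h) - 1) + 1 = k0 + Nat.find (hexd h) := by omega
      rw [h5] at h4
      omega
    refine ⟨hu_lt, hu_eq, by simp only [hd_def]; omega,
      by simp only [hd_def]; omega, by simp only [hd_def]; exact hd_eq, ?_, ?_⟩
    · intro p hp1 hp2
      rcases eq_or_lt_of_le hp1 with h' | h'
      · rw [← h', hu_eq]
      · exact le_of_lt (hu_gt p h' hp2)
    · intro p hp1 hp2
      simp only [hd_def] at hp2
      have hps : p = k0 + (p - k0) := by omega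
      rcases lt_or_eq_of_le (show p - k0 ≤ Nat.find (hexd h) by omega) with h' | h'
      · rw [hps]; exact le_of_lt (hd_gt _ h')
      · rw [hps, h', hd_eq]
  -- pigeonhole
  set F : ℕ → (A₁.Q × A₂.Q × ℤ) × (A₁.Q × A₂.Q × ℤ) := fun h =>
    ((q1 (u h), q2 (u h), (α:ℤ) * (m (u h)) - (β:ℤ) * (nn (u h))),
     (q1 (d h), q2 (d h), (α:ℤ) * (m (d h)) - (β:ℤ) * (nn (d h)))) with hF_def
  set Tgt : Finset ((A₁.Q × A₂.Q × ℤ) × (A₁.Q × A₂.Q × ℤ)) :=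
    ((Finset.univ : Finset A₁.Q) ×ˢ (Finset.univ : Finset A₂.Q) ×ˢ
       Finset.Icc (-((6*K^4:ℕ):ℤ)) ((6*K^4:ℕ):ℤ)) ×ˢ
    ((Finset.univ : Finset A₁.Q) ×ˢ (Finset.univ : Finset A₂.Q) ×ˢ
       Finset.Icc (-((6*K^4:ℕ):ℤ)) ((6*K^4:ℕ):ℤ)) with hTgt_def
  have hmaps : ∀ h ∈ Finset.Icc (6*K^4 + K^2 + 1) (B^2), F h ∈ Tgt := by
    intro h hh
    simp only [Finset.mem_Icc] at hh
    have h1 : 1 ≤ h := le_trans (Nat.le_add_left 1 _) hh.1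
    obtain ⟨hul, _, hdg, hdl, _, _, _⟩ := hfacts h h1 hh.2
    have b1 := hbelt' (u h) (by omega)
    have b2 := hbelt' (d h) hdl
    rw [abs_le] at b1 b2
    simp only [hF_def, hTgt_def, Finset.mem_product, Finset.mem_univ, Finset.mem_Icc,
      true_and]
    exact ⟨⟨b1.1, b1.2⟩, b2.1, b2.2⟩
  have hcard : Tgt.card < (Finset.Icc (6*K^4 + K^2 + 1) (B^2)).card := by
    have hIcard : (((6*K^4:ℕ):ℤ) + 1 - -((6*K^4:ℕ):ℤ)).toNat = 2*(6*K^4)+1 := by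
      generalize (6*K^4 : ℕ) = E
      omega
    simp only [hTgt_def, Finset.card_product, Finset.card_univ, Nat.card_Icc,
      Int.card_Icc, hIcard]
    have hab : 4 * (Fintype.card A₁.Q * Fintype.card A₂.Q) ≤ K^2 := by
      have h1 : (4 * ((Fintype.card A₁.Q : ℤ) * (Fintype.card A₂.Q : ℤ))) ≤
          ((Fintype.card A₁.Q : ℤ) + (Fintype.card A₂.Q : ℤ))^2 := by
        nlinarith only [sq_nonneg ((Fintype.card A₁.Q : ℤ) - (Fintype.card A₂.Q : ℤ))]
      have h2 : ((K:ℤ)) = (Fintype.card A₁.Q : ℤ) + (Fintype.card A₂.Q : ℤ) := by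
        exact_mod_cast hK
      have h3 : (4 * ((Fintype.card A₁.Q : ℤ) * (Fintype.card A₂.Q : ℤ))) ≤ ((K:ℤ))^2 := by
        rw [h2]; exact h1
      exact_mod_cast h3
    have hnum : (Fintype.card A₁.Q * (Fintype.card A₂.Q * (2*(6*K^4)+1))) *
        (Fintype.card A₁.Q * (Fintype.card A₂.Q * (2*(6*K^4)+1))) + (6*K^4 + K^2 + 1)
        ≤ B^2 := by
      rw [hB_def]
      set a := Fintype.card A₁.Q with ha_def
      set b := Fintype.card A₂.Q with hb_def
      have h1 := Nat.mul_le_mul hab hab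
      have hxx : 16*((a*b)*(a*b)) ≤ K^4 := by
        calc 16*((a*b)*(a*b)) = (4*(a*b))*(4*(a*b)) := by ring
          _ ≤ K^2*K^2 := h1
          _ = K^4 := by ring
      have hKp : ∀ (s' t' : ℕ), s' ≤ t' → K^s' ≤ K^t' :=
        fun s' t' hst => Nat.pow_le_pow_right (by omega) hst
      have goal16 : 16*((a*(b*(2*(6*K^4)+1))) * (a*(b*(2*(6*K^4)+1))) + (6*K^4 + K^2 + 1))
          ≤ 16*((6*K^6+1)^2) := by
        have step1 : 16*((a*(b*(2*(6*K^4)+1))) * (a*(b*(2*(6*K^4)+1))))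
            ≤ 144*K^12 + 24*K^8 + K^4 := by
          calc 16*((a*(b*(2*(6*K^4)+1))) * (a*(b*(2*(6*K^4)+1))))
              = (16*((a*b)*(a*b))) * ((12*K^4+1)*(12*K^4+1)) := by ring
            _ ≤ K^4 * ((12*K^4+1)*(12*K^4+1)) := Nat.mul_le_mul_right _ hxx
            _ = 144*K^12 + 24*K^8 + K^4 := by ring
        have h8 := hKp 8 12 (by norm_num)
        have h4 := hKp 4 12 (by norm_num)
        have h2' := hKp 2 12 (by norm_num)
        have hrhs : 16*((6*K^6+1)^2) = 576*K^12 + 192*K^6 + 16 := by ring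
        rw [hrhs]
        have hlhs : 16*((a*(b*(2*(6*K^4)+1))) * (a*(b*(2*(6*K^4)+1))) + (6*K^4 + K^2 + 1))
            = 16*((a*(b*(2*(6*K^4)+1))) * (a*(b*(2*(6*K^4)+1)))) + 96*K^4 + 16*K^2 + 16 := by
          ring
        rw [hlhs]
        linarith only [step1, h8, h4, h2', Nat.zero_le (K^6), Nat.zero_le (K^12),
          Nat.zero_le (K^4), Nat.zero_le (K^2), Nat.zero_le (a*b)]
      exact Nat.le_of_mul_le_mul_left goal16 (by norm_num)
    rw [lt_tsub_iff_right]
    exact Nat.lt_succ_of_le hnum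
  obtain ⟨x, hxmem, y, hymem, hxy, hFxy⟩ :=
    Finset.exists_ne_map_eq_of_card_lt_of_maps_to hcard hmaps
  obtain ⟨ha, hb, hamem, hbmem, haltb, hFab⟩ :
      ∃ ha hb, ha ∈ Finset.Icc (6*K^4 + K^2 + 1) (B^2) ∧
        hb ∈ Finset.Icc (6*K^4 + K^2 + 1) (B^2) ∧ ha < hb ∧ F ha = F hb := by
    rcases lt_or_gt_of_ne hxy with h' | h'
    · exact ⟨x, y, hxmem, hymem, h', hFxy⟩
    · exact ⟨y, x, hymem, hxmem, h', hFxy.symm⟩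
  simp only [Finset.mem_Icc] at hamem hbmem
  have hha1 : 1 ≤ ha := le_trans (Nat.le_add_left 1 _) hamem.1
  have hhb1 : 1 ≤ hb := le_trans hha1 (le_of_lt haltb)
  simp only [hF_def, Prod.mk.injEq] at hFab
  obtain ⟨⟨eq_q1u, eq_q2u, eq_vu⟩, eq_q1d, eq_q2d, eq_vd⟩ := hFab
  obtain ⟨hua_lt, hua_eq, hda_gt, hda_le, hda_eq, huag, hdag⟩ := hfacts ha hha1 hamem.2
  obtain ⟨hub_lt, hub_eq, hdb_gt, hdb_le, hdb_eq, hubg, hdbg⟩ := hfacts hb hhb1 hbmem.2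
  -- the four cut points
  set i := u ha with hi_def
  set j := u hb with hj_def
  set k := d hb with hk_def
  set l := d ha with hl_def
  have hij : i < j := by
    have hle : i ≤ j := by
      simp only [hi_def, hj_def, hu_def]
      exact Nat.findGreatest_mono (fun p hp => le_trans hp (by omega)) le_rfl
    rcases lt_or_eq_of_le hle with h' | h'
    · exact h'
    · exfalso; rw [h'] at hua_eq; omega
  have hjk : j < k := lt_trans hub_lt hdb_gt
  have hkl : k < l := by
    have hle : k ≤ l := by
      simp only [hk_def, hl_def, hd_def]
      have := Nat.find_mono (p := fun t => m (k0 + t) ≤ m 0 + hb)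
        (q := fun t => m (k0 + t) ≤ m 0 + ha)
        (fun t ht => le_trans ht (by omega)) (hp := hexd hb) (hq := hexd ha)
      omega
    rcases lt_or_eq_of_le hle with h' | h'
    · exact h'
    · exfalso; rw [h'] at hdb_eq; omega
  have hlL : l ≤ T.length := hda_le
  -- counter shifts
  set t1 := hb - ha with ht1_def
  have ht1c : (t1 : ℤ) = (hb : ℤ) - (ha : ℤ) := by
    rw [ht1_def]; exact Nat.cast_sub (le_of_lt haltb)
  have hαpos : (0:ℤ) < α := by exact_mod_cast hα
  have hβpos : (0:ℤ) < β := by exact_mod_cast hβ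
  have hmi' : (m i : ℤ) = (m 0 : ℤ) + ha := by exact_mod_cast hua_eq
  have hmj' : (m j : ℤ) = (m 0 : ℤ) + hb := by exact_mod_cast hub_eq
  have hmk' : (m k : ℤ) = (m 0 : ℤ) + hb := by exact_mod_cast hdb_eq
  have hml' : (m l : ℤ) = (m 0 : ℤ) + ha := by exact_mod_cast hda_eq
  have hnij : nn i ≤ nn j := by
    have d2 : (β:ℤ) * (nn j) - (β:ℤ) * (nn i) = (α:ℤ) * ((hb:ℤ) - ha) := by
      linear_combination eq_vu + (α:ℤ) * hmj' - (α:ℤ) * hmi'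
    have hd : (0:ℤ) ≤ (α:ℤ) * ((hb:ℤ) - ha) := by
      apply mul_nonneg (le_of_lt hαpos)
      have : (ha:ℤ) ≤ (hb:ℤ) := by exact_mod_cast le_of_lt haltb
      linarith only [this]
    by_contra h'
    push_neg at h'
    have h1 : (nn j : ℤ) < (nn i : ℤ) := by exact_mod_cast h'
    have h2 : (β:ℤ) * (nn j) < (β:ℤ) * (nn i) := by
      exact mul_lt_mul_of_pos_left h1 hβpos
    linarith only [d2, hd, h2]
  set t2 := nn j - nn i with ht2_def
  have ht2c : (t2 : ℤ) = (nn j : ℤ) - (nn i : ℤ) := by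
    rw [ht2_def]; exact Nat.cast_sub hnij
  have hbt2 : (β:ℤ) * t2 = (α:ℤ) * t1 := by
    rw [ht2c, ht1c]
    linear_combination eq_vu + (α:ℤ) * hmj' - (α:ℤ) * hmi'
  -- the middle word
  set wm := (T.drop j).take (k - j) with hwm_def
  have hwmlen : wm.length = k - j := by
    simp only [hwm_def, List.length_take, List.length_drop]
    omega
  have hwmtake : ∀ p, p ≤ k - j → wm.take p = (T.drop j).take p := by
    intro p hp
    simp only [hwm_def, List.take_take]
    congr 1
    omega
  have hTadd : ∀ (a b : ℕ), T.take (a + b) = T.take a ++ (T.drop a).take b :=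
    fun a b => List.take_add
  have hhi1 : ∀ p, p ≤ k - j →
      A₁.run (A₁.run c.1 (T.take j)) (wm.take p) = A₁.run c.1 (T.take (j + p)) := by
    intro p hp
    rw [hwmtake p hp, hTadd j p, A₁.run_append]
  have hhi2 : ∀ p, p ≤ k - j →
      A₂.run (A₂.run c.2 (T.take j)) (wm.take p) = A₂.run c.2 (T.take (j + p)) := by
    intro p hp
    rw [hwmtake p hp, hTadd j p, A₂.run_append]
  have hmidge : ∀ p, p ≤ k - j → m 0 + hb ≤ m (j + p) := by
    intro p hp
    rcases le_or_gt (j + p) k0 with h' | h'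
    · exact hubg (j+p) (Nat.le_add_right _ _) h'
    · exact hdbg (j+p) (le_of_lt h') (by omega)
  -- shift for automaton 1
  have hhi_cfg1 : ((q1 j : A₁.Q), m 0 + ha + t1, (A₁.run c.1 (T.take j)).2.2)
      = A₁.run c.1 (T.take j) := by
    rw [show m 0 + ha + t1 = m j by omega]
  have hlo_cfg1 : ((q1 j : A₁.Q), m 0 + ha, (A₁.run c.1 (T.take i)).2.2)
      = A₁.run c.1 (T.take i) := by
    rw [← eq_q1u, show m 0 + ha = m i by omega]
  have hshift1 := run_shift A₁ wm (q1 j) (m 0 + ha) t1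
      (A₁.run c.1 (T.take j)).2.2 (A₁.run c.1 (T.take i)).2.2 (by
    intro p hp
    rw [hwmlen] at hp
    rw [hhi_cfg1, hhi1 p hp]
    have hcnt : (A₁.run c.1 (T.take (j+p))).2.1 = m (j + p) := by simp only [hm_def]
    rw [hcnt]
    have hge := hmidge p hp
    omega)
  have hmid1 : ∀ p, p ≤ k - j →
      (A₁.run (A₁.run c.1 (T.take i)) (wm.take p)).1 = q1 (j + p) ∧
      (A₁.run (A₁.run c.1 (T.take i)) (wm.take p)).2.1 + t1 = m (j + p) := by
    intro p hp
    have h' := hshift1 p (by rw [hwmlen]; exact hp)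
    rw [hlo_cfg1, hhi_cfg1, hhi1 p hp] at h'
    exact ⟨h'.1, h'.2⟩
  -- shift for automaton 2
  have hhi_cfg2 : ((q2 j : A₂.Q), nn i + t2, (A₂.run c.2 (T.take j)).2.2)
      = A₂.run c.2 (T.take j) := by
    rw [show nn i + t2 = nn j by omega]
  have hlo_cfg2 : ((q2 j : A₂.Q), nn i, (A₂.run c.2 (T.take i)).2.2)
      = A₂.run c.2 (T.take i) := by
    rw [← eq_q2u]
  have hshift2 := run_shift A₂ wm (q2 j) (nn i) t2
      (A₂.run c.2 (T.take j)).2.2 (A₂.run c.2 (T.take i)).2.2 (by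
    intro p hp
    rw [hwmlen] at hp
    rw [hhi_cfg2, hhi2 p hp]
    have hcnt : (A₂.run c.2 (T.take (j+p))).2.1 = nn (j + p) := by simp only [hn_def]
    rw [hcnt]
    -- need t2 + 1 ≤ nn (j + p), via the belt
    have hge := hmidge p hp
    have hbp := hbelt' (j + p) (by omega)
    rw [abs_le] at hbp
    have hb1 : (α:ℤ) * (m (j+p)) - (β:ℤ) * (nn (j+p)) ≤ ((6*K^4:ℕ):ℤ) := hbp.2
    have hgec : ((m 0 : ℤ)) + hb ≤ (m (j + p) : ℤ) := by exact_mod_cast hge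
    have e1 : (α:ℤ) * ((m 0 : ℤ) + hb) ≤ (α:ℤ) * (m (j+p)) :=
      mul_le_mul_of_nonneg_left hgec (le_of_lt hαpos)
    have e2 : ((m 0:ℤ) + ha) ≤ (α:ℤ) * ((m 0:ℤ) + ha) := by
      refine le_mul_of_one_le_left ?_ (by exact_mod_cast hα)
      positivity
    have e3 : (α:ℤ) * ((m 0:ℤ) + hb) = (α:ℤ) * (t1:ℤ) + (α:ℤ) * ((m 0:ℤ) + ha) := by
      rw [ht1c]; ring
    have e4 : ((6*K^4 + K^2 + 1 : ℕ):ℤ) ≤ (ha : ℤ) := by exact_mod_cast hamem.1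
    have e5 : ((6*K^4 + K^2 + 1 : ℕ):ℤ) = ((6*K^4:ℕ):ℤ) + ((K^2:ℕ):ℤ) + 1 := by
      push_cast; ring
    have e6 : (β:ℤ) ≤ ((K^2:ℕ):ℤ) := by exact_mod_cast hβ'
    have e7 : ((m 0:ℤ)) ≥ 0 := Nat.cast_nonneg _
    have e8 : (β:ℤ) * ((t2:ℤ) + 1) ≤ (β:ℤ) * (nn (j+p)) := by
      have : (β:ℤ) * ((t2:ℤ) + 1) = (β:ℤ) * t2 + β := by ring
      rw [this, hbt2]
      linarith only [hb1, e1, e2, e3, e4, e5, e6, e7]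
    have := le_of_mul_le_mul_left e8 hβpos
    exact_mod_cast this)
  have hmid2 : ∀ p, p ≤ k - j →
      (A₂.run (A₂.run c.2 (T.take i)) (wm.take p)).1 = q2 (j + p) ∧
      (A₂.run (A₂.run c.2 (T.take i)) (wm.take p)).2.1 + t2 = nn (j + p) := by
    intro p hp
    have h' := hshift2 p (by rw [hwmlen]; exact hp)
    rw [hlo_cfg2, hhi_cfg2, hhi2 p hp] at h'
    exact ⟨h'.1, h'.2⟩
  -- end of the middle: configurations agree with position l
  have hwm_full : wm.take (k - j) = wm := by
    rw [← hwmlen]; exact List.take_length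
  have hjk' : j + (k - j) = k := by omega
  have hmid1k := hmid1 (k - j) le_rfl
  have hmid2k := hmid2 (k - j) le_rfl
  rw [hwm_full, hjk'] at hmid1k hmid2k
  have hnkl : nn k = nn l + t2 := by
    have h1 : (β:ℤ) * (nn k) = (β:ℤ) * ((nn l : ℤ) + (t2 : ℤ)) := by
      have expand : (β:ℤ) * ((nn l : ℤ) + (t2 : ℤ)) = (β:ℤ) * (nn l) + (β:ℤ) * t2 := by ring
      rw [expand, hbt2, ht1c]
      linear_combination eq_vd + (α:ℤ) * hmk' - (α:ℤ) * hml'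
    have h2 := mul_left_cancel₀ (ne_of_gt hβpos) h1
    exact_mod_cast h2
  set E1 := A₁.run (A₁.run c.1 (T.take i)) wm with hE1_def
  set E2 := A₂.run (A₂.run c.2 (T.take i)) wm with hE2_def
  have hE1val : E1 = ((q1 l : A₁.Q), m l, E1.2.2) := by
    have h1 : E1.1 = q1 l := by rw [hmid1k.1, ← eq_q1d]
    have h2 : E1.2.1 = m l := by have := hmid1k.2; omega
    rw [← h1, ← h2]
  have hE2val : E2 = ((q2 l : A₂.Q), nn l, E2.2.2) := by
    have h1 : E2.1 = q2 l := by rw [hmid2k.1, ← eq_q2d]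
    have h2 : E2.2.1 = nn l := by have := hmid2k.2; omega
    rw [← h1, ← h2]
  -- the tail
  have htail1 : ∀ p, p ≤ T.length - l →
      (A₁.run E1 ((T.drop l).take p)).1 = q1 (l + p) ∧
      (A₁.run E1 ((T.drop l).take p)).2.1 = m (l + p) := by
    intro p hp
    rw [hE1val]
    have hw := run_wt_irrel A₁ ((T.drop l).take p) (q1 l) (m l)
      (A₁.run c.1 (T.take l)).2.2 E1.2.2
    have hcl : ((q1 l : A₁.Q), m l, (A₁.run c.1 (T.take l)).2.2)
        = A₁.run c.1 (T.take l) := by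
      simp only [hq1_def, hm_def]
    rw [hcl] at hw
    have hrun : A₁.run (A₁.run c.1 (T.take l)) ((T.drop l).take p)
        = A₁.run c.1 (T.take (l + p)) := by
      rw [hTadd l p, A₁.run_append]
    rw [hrun] at hw
    rw [hw.1, hw.2]
    exact ⟨by simp only [hq1_def], by simp only [hm_def]⟩
  have htail2 : ∀ p, p ≤ T.length - l →
      (A₂.run E2 ((T.drop l).take p)).1 = q2 (l + p) ∧
      (A₂.run E2 ((T.drop l).take p)).2.1 = nn (l + p) := by
    intro p hp
    rw [hE2val]
    have hw := run_wt_irrel A₂ ((T.drop l).take p) (q2 l) (nn l)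
      (A₂.run c.2 (T.take l)).2.2 E2.2.2
    have hcl : ((q2 l : A₂.Q), nn l, (A₂.run c.2 (T.take l)).2.2)
        = A₂.run c.2 (T.take l) := by
      simp only [hq2_def, hn_def]
    rw [hcl] at hw
    have hrun : A₂.run (A₂.run c.2 (T.take l)) ((T.drop l).take p)
        = A₂.run c.2 (T.take (l + p)) := by
      rw [hTadd l p, A₂.run_append]
    rw [hrun] at hw
    rw [hw.1, hw.2]
    exact ⟨by simp only [hq2_def], by simp only [hn_def]⟩
  have hdropfull : (T.drop l).take (T.length - l) = T.drop l := by
    apply List.take_of_length_le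
    simp [List.length_drop]
  have hlL' : l + (T.length - l) = T.length := by omega
  have htail1L := htail1 (T.length - l) le_rfl
  have htail2L := htail2 (T.length - l) le_rfl
  rw [hdropfull, hlL'] at htail1L htail2L
  -- decomposition of the new word
  have hWrun1 : A₁.run c.1 (T.take i ++ wm ++ T.drop l) = A₁.run E1 (T.drop l) := by
    rw [A₁.run_append, A₁.run_append, ← hE1_def]
  have hWrun2 : A₂.run c.2 (T.take i ++ wm ++ T.drop l) = A₂.run E2 (T.drop l) := by
    rw [A₂.run_append, A₂.run_append, ← hE2_def]
  have hilen : i ≤ T.length := by omega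
  have hWlen : (T.take i ++ wm ++ T.drop l).length = i + (k - j) + (T.length - l) := by
    simp [List.length_append, List.length_take, List.length_drop, hwmlen]
    omega
  refine ⟨i, j, k, l, hij, hjk, hkl, hlL, ?_, ?_, ?_, ?_, ?_, ?_, ?_⟩
  · -- belt condition
    rw [← hwm_def]
    intro r hr
    rw [hWlen] at hr
    rcases le_or_gt r i with hcase | hcase
    · have htk : (T.take i ++ wm ++ T.drop l).take r = T.take r := by
        rw [List.append_assoc, List.take_append_of_le_length
          (by simp [List.length_take]; omega), List.take_take]
        congr 1
        omega
      rw [htk]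
      exact hbelt r (by omega)
    rcases le_or_gt r (i + (k - j)) with hcase2 | hcase2
    · -- middle region
      have htk : (T.take i ++ wm ++ T.drop l).take r = T.take i ++ wm.take (r - i) := by
        have hlen_i : (T.take i).length = i := by rw [List.length_take]; omega
        have e2 := List.take_length_add_append (l₁ := T.take i) (l₂ := wm ++ T.drop l) (r - i)
        rw [hlen_i, show i + (r - i) = r by omega,
          List.take_append_of_le_length (show r - i ≤ wm.length by omega)] at e2
        rw [List.append_assoc]
        exact e2
      rw [htk]
      have hp : r - i ≤ k - j := by omega
      have h1 := (hmid1 (r - i) hp).2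
      have h2 := (hmid2 (r - i) hp).2
      have hrun1 : A₁.run c.1 (T.take i ++ wm.take (r - i))
          = A₁.run (A₁.run c.1 (T.take i)) (wm.take (r - i)) := by
        rw [A₁.run_append]
      have hrun2 : A₂.run c.2 (T.take i ++ wm.take (r - i))
          = A₂.run (A₂.run c.2 (T.take i)) (wm.take (r - i)) := by
        rw [A₂.run_append]
      show |(α : ℤ) * ((A₁.run c.1 (T.take i ++ wm.take (r-i))).2.1 : ℤ)
          - (β : ℤ) * ((A₂.run c.2 (T.take i ++ wm.take (r-i))).2.1 : ℤ)|
          ≤ ((6*K^4 : ℕ) : ℤ)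
      rw [hrun1, hrun2]
      have hc1 : ((A₁.run (A₁.run c.1 (T.take i)) (wm.take (r-i))).2.1 : ℤ)
          = (m (j + (r - i)) : ℤ) - t1 := by omega
      have hc2 : ((A₂.run (A₂.run c.2 (T.take i)) (wm.take (r-i))).2.1 : ℤ)
          = (nn (j + (r - i)) : ℤ) - t2 := by omega
      rw [hc1, hc2]
      have heq : (α:ℤ) * ((m (j + (r-i)) : ℤ) - t1) - (β:ℤ) * ((nn (j + (r-i)) : ℤ) - t2)
          = (α:ℤ) * (m (j + (r-i))) - (β:ℤ) * (nn (j + (r-i))) := by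
        linear_combination hbt2
      rw [heq]
      exact hbelt' (j + (r - i)) (by omega)
    · -- tail region
      have htk : (T.take i ++ wm ++ T.drop l).take r
          = (T.take i ++ wm) ++ (T.drop l).take (r - (i + (k - j))) := by
        have hlen_iw : (T.take i ++ wm).length = i + (k - j) := by
          rw [List.length_append, List.length_take, hwmlen]; omega
        have e2 := List.take_length_add_append (l₁ := T.take i ++ wm) (l₂ := T.drop l)
          (r - (i + (k - j)))
        rw [hlen_iw, show i + (k - j) + (r - (i + (k - j))) = r by omega] at e2
        exact e2
      rw [htk]
      have hp : r - (i + (k - j)) ≤ T.length - l := by omega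
      have h1 := (htail1 (r - (i + (k - j))) hp).2
      have h2 := (htail2 (r - (i + (k - j))) hp).2
      have hrun1 : A₁.run c.1 ((T.take i ++ wm) ++ (T.drop l).take (r - (i + (k-j))))
          = A₁.run E1 ((T.drop l).take (r - (i + (k-j)))) := by
        rw [A₁.run_append, A₁.run_append, ← hE1_def]
      have hrun2 : A₂.run c.2 ((T.take i ++ wm) ++ (T.drop l).take (r - (i + (k-j))))
          = A₂.run E2 ((T.drop l).take (r - (i + (k-j)))) := by
        rw [A₂.run_append, A₂.run_append, ← hE2_def]
      show |(α : ℤ) * ((A₁.run c.1 ((T.take i ++ wm) ++ (T.drop l).take (r - (i + (k-j))))).2.1 : ℤ)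
          - (β : ℤ) * ((A₂.run c.2 ((T.take i ++ wm) ++ (T.drop l).take (r - (i + (k-j))))).2.1 : ℤ)|
          ≤ ((6*K^4 : ℕ) : ℤ)
      rw [hrun1, hrun2, h1, h2]
      exact hbelt' (l + (r - (i + (k - j)))) (by omega)
  · rw [← hwm_def]
    show (A₁.run c.1 (T.take i ++ wm ++ T.drop l)).2.1 = c.1.2.1
    rw [hWrun1, htail1L.2, hmL]
  · rw [← hwm_def]
    show (A₂.run c.2 (T.take i ++ wm ++ T.drop l)).2.1 = c.2.2.1
    rw [hWrun2, htail2L.2, hnL]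
  · rw [← hwm_def]
    show (A₁.run c.1 (T.take i ++ wm ++ T.drop l)).1 = (A₁.run c.1 T).1
    rw [hWrun1, htail1L.1]
    simp only [hq1_def, List.take_length]
  · rw [← hwm_def]
    show (A₂.run c.2 (T.take i ++ wm ++ T.drop l)).1 = (A₂.run c.2 T).1
    rw [hWrun2, htail2L.1]
    simp only [hq2_def, List.take_length]
  · rw [← hwm_def]
    show (A₁.run c.1 (T.take i ++ wm ++ T.drop l)).2.1 = (A₁.run c.1 T).2.1
    rw [hWrun1, htail1L.2]
    simp only [hm_def, List.take_length]
  · rw [← hwm_def]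
    show (A₂.run c.2 (T.take i ++ wm ++ T.drop l)).2.1 = (A₂.run c.2 T).2.1
    rw [hWrun2, htail2L.2]
    simp only [hn_def, List.take_length]
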